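/- arXiv:2408.10049 — 8 statements merged into one kernel-verified Lean document; each statement's English description precedes it below -/
import Mathlib

section
/- Let σ: [p] → [q] be a surjective monotone map with σ(0)=0 and σ(p)=q, and let (T,p), (U,q) be necklaces with σ(T) = U. Then the following are equivalent: (1) σ is spine collapsing, i.e. for every i < p with σ(i) = σ(i+1) we have i ∈ T and i+1 ∈ T; (2) σ restricts to a bijection from [p] \ T onto [q] \ U; (3) dim(T) = dim(U), i.e. |[p] \ T| = |[q] \ U|. -/
/-- From spine collapsing: any two distinct points with equal image both lie in `T`. -/
lemma lemA_aux {p q : ℕ} (T : Finset (Fin (p + 1))) (σ : Fin (p + 1) →o Fin (q + 1))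
    (hSC : ∀ i : Fin p, σ i.castSucc = σ i.succ → i.castSucc ∈ T ∧ i.succ ∈ T)
    {x y : Fin (p + 1)} (hxy : x < y) (he : σ x = σ y) : x ∈ T ∧ y ∈ T := by
  have hx' : (x : ℕ) < p := by
    have := y.isLt; have := (Fin.lt_def.mp hxy); omega
  have hy' : (y : ℕ) - 1 < p := by
    have := y.isLt; have := (Fin.lt_def.mp hxy); omega
  have hy0 : 1 ≤ (y : ℕ) := by
    have := (Fin.lt_def.mp hxy); omega
  -- x ∈ T
  set i : Fin p := ⟨x, hx'⟩ with hi
  have hcast : i.castSucc = x := by ext; simp [hi]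
  have hsle : i.succ ≤ y := by
    rw [Fin.le_def]; simp [hi]; omega
  have he1 : σ i.castSucc = σ i.succ := by
    have h1 : σ i.castSucc ≤ σ i.succ := σ.monotone (le_of_lt (Fin.castSucc_lt_succ (i := i)))
    have h2 : σ i.succ ≤ σ y := σ.monotone hsle
    rw [hcast] at h1 ⊢
    exact le_antisymm h1 (by rw [← he] at h2; exact h2)
  have hxT : x ∈ T := hcast ▸ (hSC i he1).1
  -- y ∈ T
  set j : Fin p := ⟨(y : ℕ) - 1, hy'⟩ with hj
  have hjs : j.succ = y := by ext; simp [hj]; omega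
  have hxle : x ≤ j.castSucc := by
    rw [Fin.le_def]; simp [hj]
    have := (Fin.lt_def.mp hxy); omega
  have he2 : σ j.castSucc = σ j.succ := by
    have h1 : σ x ≤ σ j.castSucc := σ.monotone hxle
    have h2 : σ j.castSucc ≤ σ j.succ := σ.monotone (le_of_lt (Fin.castSucc_lt_succ (i := j)))
    have h3 : σ j.succ = σ x := by rw [hjs, ← he]
    exact le_antisymm h2 (le_trans (le_of_eq h3) h1)
  exact ⟨hxT, hjs ▸ (hSC j he2).2⟩

/-- For an active surjective necklace map `σ : (T,p) → (U,q)` the following are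
equivalent: (1) `σ` is spine collapsing (whenever `σ(i) = σ(i+1)`, both `i` and
`i+1` are joints); (2) `σ` restricts to a bijection `[p] \ T ≅ [q] \ U`;
(3) `dim T = dim U`. -/
theorem spine_collapsing_tfae
    (p q : ℕ) (T : Finset (Fin (p + 1))) (U : Finset (Fin (q + 1)))
    (h0T : 0 ∈ T) (hpT : Fin.last p ∈ T) (h0U : 0 ∈ U) (hqU : Fin.last q ∈ U)
    (σ : Fin (p + 1) →o Fin (q + 1)) (hσ0 : σ 0 = 0) (hσp : σ (Fin.last p) = Fin.last q)
    (hsurj : Function.Surjective σ) (himg : T.image σ = U) :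
    ((∀ i : Fin p, σ i.castSucc = σ i.succ → i.castSucc ∈ T ∧ i.succ ∈ T) ↔
      Set.BijOn σ ↑(Tᶜ) ↑(Uᶜ)) ∧
    ((∀ i : Fin p, σ i.castSucc = σ i.succ → i.castSucc ∈ T ∧ i.succ ∈ T) ↔
      (Tᶜ).card = (Uᶜ).card) := by
  classical
  have h12 : (∀ i : Fin p, σ i.castSucc = σ i.succ → i.castSucc ∈ T ∧ i.succ ∈ T) →
      Set.BijOn σ ↑(Tᶜ) ↑(Uᶜ) := by
    intro hSC
    have key : ∀ x, x ∉ T → σ x ∉ U := by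
      intro x hx hU'
      rw [← himg, Finset.mem_image] at hU'
      obtain ⟨t, htT, hte⟩ := hU'
      rcases lt_trichotomy t x with h | h | h
      · exact hx (lemA_aux T σ hSC h hte).2
      · exact hx (h ▸ htT)
      · exact hx (lemA_aux T σ hSC h hte.symm).1
    refine ⟨?_, ?_, ?_⟩
    · intro x hx
      simp only [Finset.coe_compl, Set.mem_compl_iff, Finset.mem_coe] at hx ⊢
      exact key x hx
    · intro x hx y hy he
      simp only [Finset.coe_compl, Set.mem_compl_iff, Finset.mem_coe] at hx hy
      by_contra hne
      rcases lt_trichotomy x y with h | h | h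
      · exact hx (lemA_aux T σ hSC h he).1
      · exact hne h
      · exact hy (lemA_aux T σ hSC h he.symm).1
    · intro y hy
      obtain ⟨x, hx⟩ := hsurj y
      simp only [Finset.coe_compl, Set.mem_compl_iff, Finset.mem_coe] at hy
      refine ⟨x, ?_, hx⟩
      simp only [Finset.coe_compl, Set.mem_compl_iff, Finset.mem_coe]
      intro hxT
      exact hy (himg ▸ Finset.mem_image.mpr ⟨x, hxT, hx⟩)
  have h23 : Set.BijOn σ ↑(Tᶜ) ↑(Uᶜ) → (Tᶜ).card = (Uᶜ).card := by
    intro hbij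
    calc (Tᶜ).card = (↑(Tᶜ) : Set (Fin (p + 1))).ncard := (Set.ncard_coe_finset _).symm
      _ = (σ '' ↑(Tᶜ)).ncard := (Set.ncard_image_of_injOn hbij.injOn).symm
      _ = (↑(Uᶜ) : Set (Fin (q + 1))).ncard := by rw [hbij.image_eq]
      _ = (Uᶜ).card := Set.ncard_coe_finset _
  have h31 : (Tᶜ).card = (Uᶜ).card →
      (∀ i : Fin p, σ i.castSucc = σ i.succ → i.castSucc ∈ T ∧ i.succ ∈ T) := by
    intro hcard
    have hT : (Tᶜ).card = ∑ j : Fin (q + 1), ((Tᶜ).filter (fun x => σ x = j)).card :=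
      Finset.card_eq_sum_card_fiberwise (fun x _ => Finset.mem_univ _)
    have hU : (Uᶜ).card = ∑ j : Fin (q + 1), (if j ∈ Uᶜ then 1 else 0) := by
      rw [Finset.sum_ite_mem, Finset.univ_inter, Finset.card_eq_sum_ones]
    have hpt : ∀ j ∈ Finset.univ, (if j ∈ Uᶜ then 1 else 0) ≤
        ((Tᶜ).filter (fun x => σ x = j)).card := by
      intro j _
      split_ifs with hj
      · obtain ⟨x, hx⟩ := hsurj j
        have hxT : x ∉ T := fun hxT =>
          (Finset.mem_compl.mp hj) (himg ▸ Finset.mem_image.mpr ⟨x, hxT, hx⟩)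
        exact Finset.card_pos.mpr ⟨x, Finset.mem_filter.mpr ⟨Finset.mem_compl.mpr hxT, hx⟩⟩
      · exact Nat.zero_le _
    have hsum : ∑ j : Fin (q + 1), (if j ∈ Uᶜ then 1 else 0) =
        ∑ j : Fin (q + 1), ((Tᶜ).filter (fun x => σ x = j)).card := by
      rw [← hU, ← hT, hcard]
    have heach := (Finset.sum_eq_sum_iff_of_le hpt).mp hsum
    intro i hei
    set j := σ i.castSucc with hjdef
    have hj := heach j (Finset.mem_univ j)
    by_cases hjU : j ∈ U
    · -- fiber over j is disjoint from Tᶜ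
      have hzero : ((Tᶜ).filter (fun x => σ x = j)).card = 0 := by
        rw [← hj]; simp [Finset.mem_compl.not.mpr, hjU]
      have hempty := Finset.card_eq_zero.mp hzero
      constructor
      · by_contra hc
        have : i.castSucc ∈ (Tᶜ).filter (fun x => σ x = j) :=
          Finset.mem_filter.mpr ⟨Finset.mem_compl.mpr hc, rfl⟩
        simp [hempty] at this
      · by_contra hc
        have : i.succ ∈ (Tᶜ).filter (fun x => σ x = j) :=
          Finset.mem_filter.mpr ⟨Finset.mem_compl.mpr hc, hei.symm⟩
        simp [hempty] at this
    · -- contradiction: fiber has two elements not in T but card ≤ 1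
      exfalso
      have hc1 : i.castSucc ∉ T := fun h =>
        hjU (himg ▸ Finset.mem_image.mpr ⟨i.castSucc, h, rfl⟩)
      have hc2 : i.succ ∉ T := fun h =>
        hjU (himg ▸ Finset.mem_image.mpr ⟨i.succ, h, hei.symm⟩)
      have hm1 : i.castSucc ∈ (Tᶜ).filter (fun x => σ x = j) :=
        Finset.mem_filter.mpr ⟨Finset.mem_compl.mpr hc1, rfl⟩
      have hm2 : i.succ ∈ (Tᶜ).filter (fun x => σ x = j) :=
        Finset.mem_filter.mpr ⟨Finset.mem_compl.mpr hc2, hei.symm⟩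
      have hne : i.castSucc ≠ i.succ := ne_of_lt (Fin.castSucc_lt_succ (i := i))
      have h2le : 1 < ((Tᶜ).filter (fun x => σ x = j)).card :=
        Finset.one_lt_card.mpr ⟨_, hm1, _, hm2, hne⟩
      have : (if j ∈ Uᶜ then 1 else 0) = 1 := by simp [Finset.mem_compl.mpr hjU]
      omega
  exact ⟨⟨h12, fun h => h31 (h23 h)⟩, ⟨fun h => h23 (h12 h), h31⟩⟩
end

section
/- The active-surjective maps and the injective maps form an orthogonal factorization system on the category of necklaces: every necklace map f: (T,p) → (U,q) factors uniquely as an active surjective necklace map followed by an injective necklace map. -/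
/-!
Every necklace map is in particular a monotone map `f : [p] → [q]` of finite ordinals, and those
factor uniquely as a monotone surjection onto `[r]`, where `r + 1` is the size of the image of `f`,
followed by the order embedding `[r] → [q]` enumerating that image. A monotone surjection preserves
both endpoints, hence so does the embedding. Activeness forces the middle necklace to be `g(T)`,
and `U ⊆ f(T) = h(g(T))` makes `h` a necklace map.
-/

open Function

theorem Monotone.map_bot_of_surjective {α β : Type*} [Preorder α] [OrderBot α] [PartialOrder β]
    [OrderBot β] {g : α → β} (hmono : Monotone g) (hg : Surjective g) : g ⊥ = ⊥ := by
  obtain ⟨a, ha⟩ := hg ⊥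
  exact le_bot_iff.1 (ha ▸ hmono bot_le)

theorem Monotone.map_top_of_surjective {α β : Type*} [Preorder α] [OrderTop α] [PartialOrder β]
    [OrderTop β] {g : α → β} (hmono : Monotone g) (hg : Surjective g) : g ⊤ = ⊤ :=
  hmono.dual.map_bot_of_surjective hg

theorem OrderHom.exists_surjective_strictMono_factorization {α β : Type*} [Preorder α]
    [Fintype α] [LinearOrder β] (f : α →o β) :
    ∃ (k : ℕ) (g : α →o Fin k) (h : Fin k →o β), Surjective g ∧ StrictMono h ∧ ∀ i, h (g i) = f i := by
  classical
  let S := Finset.univ.image f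
  let e := S.orderIsoOfFin rfl
  let toS : α →o S := ⟨fun i ↦ ⟨f i, Finset.mem_image_of_mem f (Finset.mem_univ i)⟩,
    fun _ _ hij ↦ f.monotone hij⟩
  have htoS : Surjective toS := by
    rintro ⟨b, hb⟩
    obtain ⟨i, -, rfl⟩ := Finset.mem_image.1 hb
    exact ⟨i, rfl⟩
  refine ⟨S.card, (e.symm : S →o Fin S.card).comp toS,
    (OrderHom.Subtype.val _).comp (e : Fin S.card →o S), ?_, ?_, ?_⟩
  · exact e.symm.surjective.comp htoS
  · exact Subtype.strictMono_coe _ |>.comp e.strictMono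
  · intro i
    exact Subtype.ext_iff.1 (e.apply_symm_apply (toS i))

theorem card_eq_of_surjective_injective_factorizations {α β : Type*} {k l : ℕ}
    {g : α → Fin k} {h : Fin k → β} {g' : α → Fin l} {h' : Fin l → β}
    (hg : Surjective g) (hh : Injective h) (hg' : Surjective g') (hh' : Injective h')
    (hfac : h ∘ g = h' ∘ g') : k = l := by
  have hrange : Set.range h = Set.range h' := by
    rw [← hg.range_comp, ← hg'.range_comp, hfac]
  have hcard := Nat.card_range_of_injective hh
  rw [hrange, Nat.card_range_of_injective hh'] at hcard
  simpa using hcard.symm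

theorem surjective_strictMono_factorization_unique {α β : Type*} [LinearOrder β] {k : ℕ}
    {g g' : α → Fin k} {h h' : Fin k → β}
    (hg : Surjective g) (hh : StrictMono h) (hg' : Surjective g') (hh' : StrictMono h')
    (hfac : h ∘ g = h' ∘ g') : h = h' ∧ g = g' := by
  have hh_eq : h = h' := (hh.range_inj hh').1 <| by
    rw [← hg.range_comp, ← hg'.range_comp, hfac]
  subst hh_eq
  exact ⟨rfl, hh.injective.comp_left hfac⟩

theorem necklace_activeSurjective_injective_factorization_general
    (p q : ℕ) (T : Finset (Fin (p + 1))) (U : Finset (Fin (q + 1)))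
    (h0T : 0 ∈ T) (hpT : Fin.last p ∈ T)
    (f : Fin (p + 1) →o Fin (q + 1)) (hf0 : f 0 = 0) (hfl : f (Fin.last p) = Fin.last q)
    (hsub : U ⊆ T.image f) :
    ∃! x : Σ r : ℕ, Finset (Fin (r + 1)) × (Fin (p + 1) →o Fin (r + 1)) × (Fin (r + 1) →o Fin (q + 1)),
      -- the middle object (V, r) is a necklace
      (0 ∈ x.2.1 ∧ Fin.last x.1 ∈ x.2.1) ∧
      -- g is an active surjective necklace map (T,p) → (V,r)
      x.2.2.1 0 = 0 ∧ x.2.2.1 (Fin.last p) = Fin.last x.1 ∧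
      Function.Surjective x.2.2.1 ∧ T.image x.2.2.1 = x.2.1 ∧
      -- h is an injective necklace map (V,r) → (U,q)
      x.2.2.2 0 = 0 ∧ x.2.2.2 (Fin.last x.1) = Fin.last q ∧
      Function.Injective x.2.2.2 ∧ U ⊆ x.2.1.image x.2.2.2 ∧
      -- h ∘ g = f
      (∀ i, x.2.2.2 (x.2.2.1 i) = f i) := by
  obtain ⟨_ | r, g, h, hg, hh, hfac⟩ := f.exists_surjective_strictMono_factorization
  · exact (g 0).elim0
  have hg0 : g 0 = 0 := g.monotone.map_bot_of_surjective hg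
  have hgl : g (Fin.last p) = Fin.last r := g.monotone.map_top_of_surjective hg
  have hh0 : h 0 = 0 := by rw [← hg0, hfac, hf0]
  have hhl : h (Fin.last r) = Fin.last q := by rw [← hgl, hfac, hfl]
  have hU : U ⊆ (T.image g).image h := by
    rwa [Finset.image_image, show h ∘ g = f from funext hfac]
  refine ⟨⟨r, T.image g, g, h⟩, ⟨⟨hg0 ▸ Finset.mem_image_of_mem g h0T,
    hgl ▸ Finset.mem_image_of_mem g hpT⟩, hg0, hgl, hg, rfl, hh0, hhl, hh.injective, hU, hfac⟩, ?_⟩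
  rintro ⟨r', V', g', h'⟩ ⟨-, -, -, hg', hV, -, -, hh', -, hfac'⟩
  have hfac_eq : ⇑h' ∘ ⇑g' = ⇑h ∘ ⇑g := funext fun i ↦ (hfac' i).trans (hfac i).symm
  obtain rfl : r' = r := Nat.succ_injective <|
    card_eq_of_surjective_injective_factorizations hg' hh' hg hh.injective hfac_eq
  obtain ⟨hh_eq, hg_eq⟩ := surjective_strictMono_factorization_unique hg'
    (h'.monotone.strictMono_of_injective hh') hg hh hfac_eq
  obtain rfl : h' = h := OrderHom.ext _ _ hh_eq
  obtain rfl : g' = g := OrderHom.ext _ _ hg_eq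
  exact Sigma.ext rfl (heq_of_eq (Prod.ext hV.symm rfl))

/-- (Active surjective, injective) is an orthogonal factorization system on the
category of necklaces: every necklace map `f : (T,p) → (U,q)` factors uniquely
as an active surjective necklace map `g : (T,p) → (V,r)` followed by an
injective necklace map `h : (V,r) → (U,q)`. -/
theorem necklace_activeSurjective_injective_factorization
    (p q : ℕ) (T : Finset (Fin (p + 1))) (U : Finset (Fin (q + 1)))
    (h0T : 0 ∈ T) (hpT : Fin.last p ∈ T) (h0U : 0 ∈ U) (hqU : Fin.last q ∈ U)
    (f : Fin (p + 1) →o Fin (q + 1)) (hf0 : f 0 = 0) (hfl : f (Fin.last p) = Fin.last q)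
    (hsub : U ⊆ T.image f) :
    ∃! x : Σ r : ℕ, Finset (Fin (r + 1)) × (Fin (p + 1) →o Fin (r + 1)) × (Fin (r + 1) →o Fin (q + 1)),
      -- the middle object (V, r) is a necklace
      (0 ∈ x.2.1 ∧ Fin.last x.1 ∈ x.2.1) ∧
      -- g is an active surjective necklace map (T,p) → (V,r)
      x.2.2.1 0 = 0 ∧ x.2.2.1 (Fin.last p) = Fin.last x.1 ∧
      Function.Surjective x.2.2.1 ∧ T.image x.2.2.1 = x.2.1 ∧
      -- h is an injective necklace map (V,r) → (U,q)
      x.2.2.2 0 = 0 ∧ x.2.2.2 (Fin.last x.1) = Fin.last q ∧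
      Function.Injective x.2.2.2 ∧ U ⊆ x.2.1.image x.2.2.2 ∧
      -- h ∘ g = f
      (∀ i, x.2.2.2 (x.2.2.1 i) = f i) :=
  necklace_activeSurjective_injective_factorization_general p q T U h0T hpT f hf0 hfl hsub
end

section
/- Let ι: Nec₋ → Nec be the inclusion of the subcategory of active surjective necklace maps, and let D': Nec₋ → V be a functor into a cocomplete category V. Then for every necklace T, the left Kan extension of D' along ι evaluated at T is naturally isomorphic to the coproduct of D'(U) over all injective necklace maps U ↪ T: (Lan_ι D')(T) ≅ ⨿_{U ↪ T injective} D'(U). -/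
open CategoryTheory CategoryTheory.Limits

/-- A necklace `(T,p)`: a subset of `[p] = {0,…,p}` (encoded inside `Fin (p+1)`)
containing both endpoints. -/
structure Neck : Type where
  p : ℕ
  T : Finset (Fin (p + 1))
  zero_mem : 0 ∈ T
  last_mem : Fin.last p ∈ T

/-- A necklace map: a monotone endpoint-preserving map with `Y.T ⊆ f(X.T)`. -/
@[ext]
structure NeckHom (X Y : Neck) : Type where
  toFun : Fin (X.p + 1) →o Fin (Y.p + 1)
  map_zero : toFun 0 = 0
  map_last : toFun (Fin.last X.p) = Fin.last Y.p
  joints : Y.T ⊆ X.T.image toFun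

/-- The identity necklace map. -/
def NeckHom.id' (X : Neck) : NeckHom X X :=
  ⟨OrderHom.id, rfl, rfl, by simp⟩

/-- Composition of necklace maps. -/
def NeckHom.comp' {X Y Z : Neck} (f : NeckHom X Y) (g : NeckHom Y Z) : NeckHom X Z :=
  ⟨g.toFun.comp f.toFun,
    by show g.toFun (f.toFun 0) = 0; rw [f.map_zero, g.map_zero],
    by show g.toFun (f.toFun _) = _; rw [f.map_last, g.map_last],
    by
      refine g.joints.trans ?_
      refine (Finset.image_subset_image f.joints).trans ?_
      rw [Finset.image_image]
      exact Finset.Subset.refl _⟩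

/-- The category `Nec` of necklaces. -/
instance : Category Neck where
  Hom := NeckHom
  id := NeckHom.id'
  comp f g := f.comp' g
  id_comp f := NeckHom.ext rfl
  comp_id f := NeckHom.ext rfl
  assoc f g h := NeckHom.ext rfl

/-- The objects of the wide subcategory `Nec₋` of active surjective necklace
maps. -/
structure NeckM : Type where
  obj : Neck

/-- Active surjective necklace maps. -/
def ActSurj {X Y : Neck} (f : NeckHom X Y) : Prop :=
  Function.Surjective f.toFun ∧ Y.T = X.T.image f.toFun

/-- Morphisms of `Nec₋`. -/
def NeckMHom (X Y : NeckM) : Type :=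
  {f : NeckHom X.obj Y.obj // ActSurj f}

/-- The wide subcategory `Nec₋ ⊆ Nec` of active surjective necklace maps. -/
instance : Category NeckM where
  Hom := NeckMHom
  id X := ⟨NeckHom.id' X.obj, Function.surjective_id, by
    show X.obj.T = X.obj.T.image ⇑OrderHom.id
    simp⟩
  comp {X Y Z} f g :=
    ⟨f.1.comp' g.1, g.2.1.comp f.2.1, by
      show Z.obj.T = X.obj.T.image ⇑(g.1.toFun.comp f.1.toFun)
      rw [g.2.2, f.2.2, Finset.image_image]
      rfl⟩
  id_comp f := Subtype.ext (NeckHom.ext rfl)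
  comp_id f := Subtype.ext (NeckHom.ext rfl)
  assoc f g h := Subtype.ext (NeckHom.ext rfl)

/-- The inclusion `ι : Nec₋ ↪ Nec`. -/
def iota : NeckM ⥤ Neck where
  obj X := X.obj
  map f := Subtype.val f
  map_id X := rfl
  map_comp f g := rfl

/-!
Every necklace map `f : X → Y` factors as an active surjection onto its image necklace followed
by an injection, and such a factorization is unique: the injective part is the unique strictly
monotone enumeration of the range of `f`, and then the surjective part and the beads of the
middle necklace are forced. Hence every object of the comma category `(ι ↓ T)` maps to exactly
one injective map `U ↪ T`, so the discrete category of injective maps into `T` is final in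
`(ι ↓ T)`, and the pointwise colimit formula for `(Lan_ι D')(T)` collapses to a coproduct.
-/

namespace NeckHom

variable {X Y : Neck} (f : NeckHom X Y)

def range : Finset (Fin (Y.p + 1)) :=
  Finset.univ.image f.toFun

def imageLength : ℕ :=
  f.range.card - 1

lemma card_range : f.range.card = f.imageLength + 1 := by
  have : 0 < f.range.card := Finset.card_pos.2 ⟨_, Finset.mem_image_of_mem _ (Finset.mem_univ 0)⟩
  rw [imageLength]
  omega

def imageEmb : Fin (f.imageLength + 1) ↪o Fin (Y.p + 1) :=
  f.range.orderEmbOfFin f.card_range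

def toImage : Fin (X.p + 1) →o Fin (f.imageLength + 1) where
  toFun x := (f.range.orderIsoOfFin f.card_range).symm
    ⟨f.toFun x, Finset.mem_image_of_mem _ (Finset.mem_univ x)⟩
  monotone' _ _ hxy := (f.range.orderIsoOfFin f.card_range).symm.monotone (f.toFun.monotone hxy)

lemma imageEmb_toImage (x : Fin (X.p + 1)) : f.imageEmb (f.toImage x) = f.toFun x := by
  rw [imageEmb, ← Finset.coe_orderIsoOfFin_apply]
  exact congrArg Subtype.val (OrderIso.apply_symm_apply _ _)

lemma toImage_surjective : Function.Surjective f.toImage := by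
  intro y
  obtain ⟨x, -, hx⟩ := Finset.mem_image.1 (f.range.orderEmbOfFin_mem f.card_range y)
  exact ⟨x, f.imageEmb.injective ((f.imageEmb_toImage x).trans hx)⟩

lemma toImage_zero : f.toImage 0 = 0 := by
  obtain ⟨x, hx⟩ := f.toImage_surjective 0
  exact le_antisymm (hx ▸ f.toImage.monotone (Fin.zero_le x)) (Fin.zero_le _)

lemma toImage_last : f.toImage (Fin.last X.p) = Fin.last f.imageLength := by
  obtain ⟨x, hx⟩ := f.toImage_surjective (Fin.last _)
  exact le_antisymm (Fin.le_last _) (hx ▸ f.toImage.monotone (Fin.le_last x))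

def image : Neck where
  p := f.imageLength
  T := X.T.image f.toImage
  zero_mem := Finset.mem_image.2 ⟨0, X.zero_mem, f.toImage_zero⟩
  last_mem := Finset.mem_image.2 ⟨Fin.last X.p, X.last_mem, f.toImage_last⟩

def factorThruImage : NeckHom X f.image :=
  ⟨f.toImage, f.toImage_zero, f.toImage_last, subset_rfl⟩

def imageι : NeckHom f.image Y where
  toFun := f.imageEmb.toOrderHom
  map_zero := by
    change f.imageEmb 0 = 0
    rw [← f.toImage_zero, f.imageEmb_toImage, f.map_zero]
  map_last := by
    change f.imageEmb (Fin.last _) = _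
    rw [← f.toImage_last, f.imageEmb_toImage, f.map_last]
  joints := by
    change Y.T ⊆ (X.T.image f.toImage).image f.imageEmb
    rw [Finset.image_image, show ⇑f.imageEmb ∘ f.toImage = f.toFun from funext f.imageEmb_toImage]
    exact f.joints

lemma factorThruImage_comp'_imageι : f.factorThruImage.comp' f.imageι = f :=
  NeckHom.ext (OrderHom.ext _ _ (funext f.imageEmb_toImage))

lemma actSurj_factorThruImage : ActSurj f.factorThruImage :=
  ⟨f.toImage_surjective, rfl⟩

lemma injective_imageι : Function.Injective f.imageι.toFun :=
  f.imageEmb.injective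

theorem factorization_unique {W W' : Neck} {e : NeckHom X W} {m : NeckHom W Y}
    {e' : NeckHom X W'} {m' : NeckHom W' Y} (he : ActSurj e) (he' : ActSurj e')
    (hm : Function.Injective m.toFun) (hm' : Function.Injective m'.toFun)
    (h : e.comp' m = e'.comp' m') :
    (⟨W, e, m⟩ : Σ W : Neck, NeckHom X W × NeckHom W Y) = ⟨W', e', m'⟩ := by
  have hcomp : ⇑m.toFun ∘ ⇑e.toFun = ⇑m'.toFun ∘ ⇑e'.toFun :=
    congrArg (fun g : NeckHom X Y => ⇑g.toFun) h
  have hrange : Set.range m.toFun = Set.range m'.toFun := by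
    rw [← he.1.range_comp, hcomp, he'.1.range_comp]
  obtain ⟨p, T, _, _⟩ := W
  obtain ⟨p', T', _, _⟩ := W'
  obtain rfl : p = p' := by
    have hcard := congrArg (fun s : Set (Fin (Y.p + 1)) => Nat.card s) hrange
    simp only [Nat.card_range_of_injective hm, Nat.card_range_of_injective hm', Nat.card_fin]
      at hcard
    omega
  have hmm : ⇑m.toFun = ⇑m'.toFun :=
    ((m.toFun.monotone.strictMono_of_injective hm).range_inj
      (m'.toFun.monotone.strictMono_of_injective hm')).1 hrange
  have hee : ⇑e.toFun = ⇑e'.toFun := funext fun x => hm (by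
    simpa only [Function.comp_apply, hmm] using congrFun hcomp x)
  obtain rfl : T = T' := he.2.trans (hee ▸ he'.2.symm)
  rw [NeckHom.ext (OrderHom.ext _ _ hee), NeckHom.ext (OrderHom.ext _ _ hmm)]

end NeckHom

abbrev InjectiveHomTo (T : Neck) : Type :=
  Σ U : NeckM, {f : NeckHom U.obj T // Function.Injective f.toFun}

def injectiveHomToInclusion (T : Neck) :
    Discrete (InjectiveHomTo T) ⥤ CostructuredArrow iota T :=
  Discrete.functor fun i => CostructuredArrow.mk (Y := i.1) (i.2.1 : iota.obj i.1 ⟶ T)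

instance (T : Neck) (c : CostructuredArrow iota T) :
    Nonempty (StructuredArrow c (injectiveHomToInclusion T)) := by
  let f : NeckHom c.left.obj T := c.hom
  let i : InjectiveHomTo T := ⟨⟨f.image⟩, f.imageι, f.injective_imageι⟩
  let g : c ⟶ (injectiveHomToInclusion T).obj ⟨i⟩ := CostructuredArrow.homMk
    ⟨f.factorThruImage, f.actSurj_factorThruImage⟩ f.factorThruImage_comp'_imageι
  exact ⟨StructuredArrow.mk g⟩

instance (T : Neck) (c : CostructuredArrow iota T) :
    Subsingleton (StructuredArrow c (injectiveHomToInclusion T)) := by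
  constructor
  rintro ⟨⟨⟨⟩⟩, ⟨⟨⟨W₁⟩, m₁, hm₁⟩⟩, ⟨⟨e₁, he₁⟩, ⟨⟨⟩⟩, w₁⟩⟩
    ⟨⟨⟨⟩⟩, ⟨⟨⟨W₂⟩, m₂, hm₂⟩⟩, ⟨⟨e₂, he₂⟩, ⟨⟨⟩⟩, w₂⟩⟩
  have h := NeckHom.factorization_unique he₁ he₂ hm₁ hm₂ (w₁.trans w₂.symm)
  obtain ⟨rfl, h⟩ := Sigma.mk.inj_iff.1 h
  obtain ⟨rfl, rfl⟩ := Prod.mk.inj (eq_of_heq h)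
  rfl

instance (T : Neck) : (injectiveHomToInclusion T).Final :=
  ⟨fun _ => isConnected_of_nonempty_and_subsingleton⟩

theorem lan_iota_eval_iso_coproduct_general
    {V : Type*} [Category V] [HasColimits V]
    (D' : NeckM ⥤ V) (E : Neck ⥤ V) (α : D' ⟶ iota ⋙ E)
    [E.IsLeftKanExtension α] (T : Neck) :
    Nonempty
      (E.obj T ≅
        ∐ fun i : (Σ U : NeckM, {f : NeckHom U.obj T // Function.Injective f.toFun}) =>
          D'.obj i.1) := by
  have hLan := (Functor.isPointwiseLeftKanExtensionOfIsLeftKanExtension E α T).isoColimit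
  exact ⟨hLan ≪≫ (Functor.Final.colimitIso (injectiveHomToInclusion T) _).symm ≪≫
    HasColimit.isoOfNatIso (Discrete.natIso fun _ => Iso.refl _)⟩

/-- Pointwise formula for the left Kan extension along `ι : Nec₋ ↪ Nec`: for
any functor `D' : Nec₋ ⥤ V` into a cocomplete category and any necklace `T`,
`(Lan_ι D')(T) ≅ ⨿_{U ↪ T injective} D'(U)`, the coproduct running over the
injective necklace maps into `T`. -/
theorem lan_iota_eval_iso_coproduct
    {V : Type*} [Category V] [HasColimits V] [HasColimitsOfSize.{0, 0} V]
    (D' : NeckM ⥤ V) (E : Neck ⥤ V) (α : D' ⟶ iota ⋙ E)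
    [E.IsLeftKanExtension α] (T : Neck) :
    Nonempty
      (E.obj T ≅
        ∐ fun i : (Σ U : NeckM, {f : NeckHom U.obj T // Function.Injective f.toFun}) =>
          D'.obj i.1) :=
  lan_iota_eval_iso_coproduct_general D' E α T
end

section
/- The dimension functor dim: Nec₊ → □₊ from injective necklace maps to injective cube maps is a discrete fibration: for every necklace (T,p) and every injective map g: [1]^n → [1]^{dim(T)} in the category of cubes with connections, there exists a unique injective necklace map f: U ↪ T with dim(U) = n and dim(f) = g. -/
def IsNeck (p : ℕ) (T : Finset ℕ) : Prop :=
  T ⊆ Finset.range (p + 1) ∧ 0 ∈ T ∧ p ∈ T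

/-- The dimension of a necklace `(T,p)`: the cardinality of the complement
`[p] \ T`. -/
abbrev cdim (p : ℕ) (T : Finset ℕ) : ℕ := (Finset.range (p + 1) \ T).card

/-- An injective necklace map `g : (U,q) ↪ (T,p)` of dimension `n`, recorded by
its image data `V = g([q])`, `W = g(U)`. -/
structure Idx (p : ℕ) (T : Finset ℕ) (n : ℕ) : Type where
  V : Finset ℕ
  W : Finset ℕ
  hTW : T ⊆ W
  hWV : W ⊆ V
  hV : V ⊆ Finset.range (p + 1)
  h0 : 0 ∈ W
  hp : p ∈ W
  hdim : (V \ W).card = n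

/-- Morphisms of the category `□` of cubes with connections, as maps of
vertex sets `[1]^a → [1]^b`: the class generated by identities, the faces
`δ_i^ε`, the degeneracies `σ_i` and the connections `γ_i`, under composition. -/
inductive IsCubeMap : ∀ {a b : ℕ}, ((Fin a → Bool) → (Fin b → Bool)) → Prop
  | id (a : ℕ) : IsCubeMap (fun v : Fin a → Bool => v)
  | face {a : ℕ} (i : Fin (a + 1)) (ε : Bool) :
      IsCubeMap (fun v : Fin a → Bool => i.insertNth ε v)
  | degen {a : ℕ} (i : Fin (a + 1)) :
      IsCubeMap (fun (v : Fin (a + 1) → Bool) (j : Fin a) => v (i.succAbove j))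
  | conn {a : ℕ} (i : Fin (a + 1)) :
      IsCubeMap (fun (v : Fin (a + 2) → Bool) (j : Fin (a + 1)) =>
        if (j : ℕ) < (i : ℕ) then v (Fin.castSucc j)
        else if j = i then v (Fin.castSucc j) || v (Fin.succ j)
        else v (Fin.succ j))
  | comp {a b c : ℕ} {f : (Fin a → Bool) → (Fin b → Bool)}
      {g : (Fin b → Bool) → (Fin c → Bool)} :
      IsCubeMap f → IsCubeMap g → IsCubeMap (fun v => g (f v))

/-!
Every cube map `[1]^a → [1]^b` has a normal form (`IsJoinForm`): the `l`-th output coordinate is a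
constant `c l` or-ed with the join of the inputs over a set `S l` of coordinates, and the sets
`S l` lie in increasing order. The generators have this form and it is stable under composition.
If the map is injective, each input coordinate `k` is the whole support of an output coordinate
`φ k` with `c (φ k) = false`, so the map is `v ↦ c ∨ φ_* v` for an order embedding `φ`.
The dimension map of an injective necklace map with data `W ⊆ V` has exactly this shape, with `c`
the indicator of `W \ T` and `φ` the position of `V \ W` inside `[p] \ T`; conversely `W` and `V`
are read off from the images of the bottom and the top vertex.
-/
structure IsJoinForm {a b : ℕ} (F : (Fin a → Bool) → (Fin b → Bool)) (c : Fin b → Bool)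
    (S : Fin b → Finset (Fin a)) : Prop where
  apply_eq_true_iff : ∀ v l, F v l = true ↔ c l = true ∨ ∃ j ∈ S l, v j = true
  lt_of_lt : ∀ ⦃l₁ l₂⦄, l₁ < l₂ → ∀ j₁ ∈ S l₁, ∀ j₂ ∈ S l₂, j₁ < j₂

namespace IsJoinForm

theorem id (a : ℕ) : IsJoinForm (fun v : Fin a → Bool => v) (fun _ => false) ({·}) where
  apply_eq_true_iff := by simp
  lt_of_lt := by simp +contextual

theorem face {a : ℕ} (i : Fin (a + 1)) (ε : Bool) :
    IsJoinForm (fun v : Fin a → Bool => i.insertNth ε v) (fun l => decide (l = i) && ε)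
      (fun l => {j | i.succAbove j = l}) where
  apply_eq_true_iff v l := by
    rcases Fin.eq_self_or_eq_succAbove i l with rfl | ⟨j, rfl⟩ <;> simp [Fin.succAbove_ne]
  lt_of_lt l₁ l₂ hl j₁ hj₁ j₂ hj₂ := by
    simp only [Finset.mem_filter, Finset.mem_univ, true_and] at hj₁ hj₂
    exact (Fin.strictMono_succAbove i).lt_iff_lt.mp (hj₁ ▸ hj₂ ▸ hl)

theorem degen {a : ℕ} (i : Fin (a + 1)) :
    IsJoinForm (fun (v : Fin (a + 1) → Bool) (j : Fin a) => v (i.succAbove j))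
      (fun _ => false) (fun j => {i.succAbove j}) where
  apply_eq_true_iff := by simp
  lt_of_lt l₁ l₂ hl := by
    simpa using Fin.strictMono_succAbove i hl

theorem conn {a : ℕ} (i : Fin (a + 1)) :
    IsJoinForm (fun (v : Fin (a + 2) → Bool) (j : Fin (a + 1)) =>
        if (j : ℕ) < (i : ℕ) then v (Fin.castSucc j)
        else if j = i then v (Fin.castSucc j) || v (Fin.succ j)
        else v (Fin.succ j))
      (fun _ => false)
      (fun l => {j | (j : ℕ) = l ∧ l ≤ i ∨ (j : ℕ) = l + 1 ∧ i ≤ l}) where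
  apply_eq_true_iff v l := by
    have hc : ∀ j : Fin (a + 2), (j : ℕ) = l ↔ j = l.castSucc := by simp [Fin.ext_iff]
    have hs : ∀ j : Fin (a + 2), (j : ℕ) = l + 1 ↔ j = l.succ := by simp [Fin.ext_iff]
    simp only [Finset.mem_filter, Finset.mem_univ, true_and, Bool.false_eq_true, false_or,
      hc, hs, or_and_right, exists_or, exists_eq_left, and_assoc]
    rcases lt_trichotomy l i with h | rfl | h
    · simp [h, h.le, not_le.mpr h]
    · simp
    · simp [not_lt.mpr h.le, h.ne', h.le, not_le.mpr h]
  lt_of_lt l₁ l₂ hl j₁ hj₁ j₂ hj₂ := by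
    simp only [Finset.mem_filter, Finset.mem_univ, true_and] at hj₁ hj₂
    rw [Fin.lt_def] at hl ⊢
    rw [Fin.le_def, Fin.le_def] at hj₁ hj₂
    omega

theorem comp {a b c : ℕ} {f : (Fin a → Bool) → (Fin b → Bool)}
    {g : (Fin b → Bool) → (Fin c → Bool)} {cf Sf cg Sg}
    (hf : IsJoinForm f cf Sf) (hg : IsJoinForm g cg Sg) :
    IsJoinForm (fun v => g (f v)) (fun l => cg l || decide (∃ k ∈ Sg l, cf k = true))
      (fun l => (Sg l).biUnion Sf) where
  apply_eq_true_iff v l := by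
    simp only [hg.apply_eq_true_iff, hf.apply_eq_true_iff, Bool.or_eq_true,
      decide_eq_true_eq, Finset.mem_biUnion]
    grind
  lt_of_lt l₁ l₂ hl j₁ hj₁ j₂ hj₂ := by
    simp only [Finset.mem_biUnion] at hj₁ hj₂
    obtain ⟨k₁, hk₁, hjk₁⟩ := hj₁
    obtain ⟨k₂, hk₂, hjk₂⟩ := hj₂
    exact hf.lt_of_lt (hg.lt_of_lt hl k₁ hk₁ k₂ hk₂) j₁ hjk₁ j₂ hjk₂

end IsJoinForm

theorem IsCubeMap.exists_isJoinForm {a b : ℕ} {F : (Fin a → Bool) → (Fin b → Bool)}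
    (h : IsCubeMap F) : ∃ c S, IsJoinForm F c S := by
  induction h with
  | id a => exact ⟨_, _, .id a⟩
  | face i ε => exact ⟨_, _, .face i ε⟩
  | degen i => exact ⟨_, _, .degen i⟩
  | conn i => exact ⟨_, _, .conn i⟩
  | comp _ _ ihf ihg =>
    obtain ⟨_, _, hf⟩ := ihf
    obtain ⟨_, _, hg⟩ := ihg
    exact ⟨_, _, hf.comp hg⟩

namespace IsJoinForm

variable {a b : ℕ} {F : (Fin a → Bool) → (Fin b → Bool)} {c : Fin b → Bool}
  {S : Fin b → Finset (Fin a)}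

theorem eq_of_mem_of_mem (hF : IsJoinForm F c S) {j : Fin a} {l₁ l₂ : Fin b}
    (h₁ : j ∈ S l₁) (h₂ : j ∈ S l₂) : l₁ = l₂ := by
  by_contra hne
  rcases lt_or_gt_of_ne hne with h | h
  · exact lt_irrefl j (hF.lt_of_lt h j h₁ j h₂)
  · exact lt_irrefl j (hF.lt_of_lt h j h₂ j h₁)

theorem exists_supp_eq_singleton (hF : IsJoinForm F c S) (hinj : Function.Injective F)
    (k : Fin a) : ∃ l, c l = false ∧ S l = {k} := by
  have hne : Function.update (fun _ => true) k false ≠ fun _ : Fin a => true :=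
    fun h => by simpa using congrFun h k
  obtain ⟨l, hl⟩ := Function.ne_iff.mp (hinj.ne hne)
  have h₀ := hF.apply_eq_true_iff (Function.update (fun _ => true) k false) l
  have h₁ := hF.apply_eq_true_iff (fun _ => true) l
  simp only [Function.update_apply] at h₀
  refine ⟨l, ?_, Finset.eq_singleton_iff_unique_mem.mpr ⟨?_, ?_⟩⟩
  all_goals grind

theorem exists_orderEmbedding (hF : IsJoinForm F c S) (hinj : Function.Injective F) :
    ∃ φ : Fin a ↪o Fin b, (∀ k, c (φ k) = false) ∧
      ∀ v l, F v l = true ↔ c l = true ∨ ∃ k, v k = true ∧ φ k = l := by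
  choose φ hφc hφS using hF.exists_supp_eq_singleton hinj
  have hmem : ∀ j l, j ∈ S l ↔ φ j = l := fun j l =>
    ⟨fun h => hF.eq_of_mem_of_mem (by simp [hφS]) h, fun h => by simp [← h, hφS]⟩
  have hmono : StrictMono φ := fun k₁ k₂ hk => by
    rcases lt_trichotomy (φ k₁) (φ k₂) with h | h | h
    · exact h
    · simpa [hφS, hk.ne'] using (hmem k₂ (φ k₁)).mpr h.symm
    · exact absurd (hF.lt_of_lt h k₂ ((hmem _ _).mpr rfl) k₁ ((hmem _ _).mpr rfl)) hk.not_gt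
  refine ⟨OrderEmbedding.ofStrictMono φ hmono, hφc, fun v l => ?_⟩
  simp [hF.apply_eq_true_iff, hmem, and_comm]

end IsJoinForm

theorem IsCubeMap.exists_orderEmbedding_of_injective {a b : ℕ}
    {F : (Fin a → Bool) → (Fin b → Bool)} (hF : IsCubeMap F) (hinj : Function.Injective F) :
    ∃ (c : Fin b → Bool) (φ : Fin a ↪o Fin b), (∀ k, c (φ k) = false) ∧
      ∀ v l, F v l = true ↔ c l = true ∨ ∃ k, v k = true ∧ φ k = l := by
  obtain ⟨c, S, hcS⟩ := hF.exists_isJoinForm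
  exact ⟨c, hcS.exists_orderEmbedding hinj⟩

abbrev complEnum (p : ℕ) (T : Finset ℕ) :
    Fin (cdim p T) ≃o (Finset.range (p + 1) \ T : Finset ℕ) :=
  (Finset.range (p + 1) \ T).orderIsoOfFin rfl

theorem eq_of_forall_complEnum_mem_iff {p : ℕ} {T X Y : Finset ℕ} (hTX : T ⊆ X) (hTY : T ⊆ Y)
    (hX : X ⊆ Finset.range (p + 1)) (hY : Y ⊆ Finset.range (p + 1))
    (h : ∀ l, (complEnum p T l : ℕ) ∈ X ↔ (complEnum p T l : ℕ) ∈ Y) : X = Y := by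
  ext z
  by_cases hzT : z ∈ T
  · exact iff_of_true (hTX hzT) (hTY hzT)
  by_cases hz : z ∈ Finset.range (p + 1)
  · obtain ⟨l, rfl⟩ : ∃ l, (complEnum p T l : ℕ) = z :=
      ⟨(complEnum p T).symm ⟨z, Finset.mem_sdiff.mpr ⟨hz, hzT⟩⟩, by simp⟩
    exact h l
  · exact iff_of_false (fun h => hz (hX h)) (fun h => hz (hY h))

attribute [ext] Idx

namespace Idx

variable {p : ℕ} {T : Finset ℕ} {n : ℕ}

/-- `dim x` in coordinates: the vertex `A` of `P_U ≅ [1]^n` goes to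
`W ∪ {k-th element of V \ W | A k}`, whose `l`-th coordinate in `P_T ≅ [1]^{dim T}` is membership
of the `l`-th element of `[p] \ T`. -/
def dimMap (x : Idx p T n) (A : Fin n → Bool) (l : Fin (cdim p T)) : Bool :=
  decide (((complEnum p T l : ℕ) ∈ x.W) ∨
    ∃ kk : Fin n, A kk = true ∧
      (((x.V \ x.W).orderIsoOfFin x.hdim kk : ℕ) = (complEnum p T l : ℕ)))

theorem dimMap_false_eq_true_iff (x : Idx p T n) (l : Fin (cdim p T)) :
    x.dimMap (fun _ => false) l = true ↔ (complEnum p T l : ℕ) ∈ x.W := by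
  simp [dimMap]

theorem dimMap_true_eq_true_iff (x : Idx p T n) (l : Fin (cdim p T)) :
    x.dimMap (fun _ => true) l = true ↔ (complEnum p T l : ℕ) ∈ x.V := by
  set e := (x.V \ x.W).orderIsoOfFin x.hdim
  simp only [dimMap, true_and, decide_eq_true_eq]
  constructor
  · rintro (hW | ⟨k, hk⟩)
    · exact x.hWV hW
    · exact hk ▸ (Finset.mem_sdiff.mp (e k).2).1
  · intro hV
    by_cases hW : (complEnum p T l : ℕ) ∈ x.W
    · exact .inl hW
    · exact .inr ⟨e.symm ⟨_, Finset.mem_sdiff.mpr ⟨hV, hW⟩⟩,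
        congrArg Subtype.val (e.apply_symm_apply _)⟩

theorem dimMap_injective : Function.Injective (dimMap : Idx p T n → _) := by
  intro x y h
  ext1
  · refine eq_of_forall_complEnum_mem_iff (x.hTW.trans x.hWV) (y.hTW.trans y.hWV) x.hV y.hV
      fun l => ?_
    rw [← dimMap_true_eq_true_iff, ← dimMap_true_eq_true_iff, h]
  · refine eq_of_forall_complEnum_mem_iff x.hTW y.hTW (x.hWV.trans x.hV) (y.hWV.trans y.hV)
      fun l => ?_
    rw [← dimMap_false_eq_true_iff, ← dimMap_false_eq_true_iff, h]

theorem exists_dimMap_eq_true_iff (hT : IsNeck p T) (c : Fin (cdim p T) → Bool)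
    (φ : Fin n ↪o Fin (cdim p T)) (hc : ∀ k, c (φ k) = false) :
    ∃ x : Idx p T n, ∀ A l, x.dimMap A l = true ↔ c l = true ∨ ∃ k, A k = true ∧ φ k = l := by
  classical
  let ι : Fin (cdim p T) ↪o ℕ := (complEnum p T).toOrderEmbedding.trans (OrderEmbedding.subtype _)
  let W := T ∪ (Finset.univ.filter (c · = true)).map ι.toEmbedding
  let D := Finset.univ.map (φ.trans ι).toEmbedding
  have hι : ∀ l, ι l ∈ Finset.range (p + 1) \ T := fun l => (complEnum p T l).2
  have hιp : ∀ l, ι l ≤ p := fun l =>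
    Nat.lt_succ_iff.mp (Finset.mem_range.mp (Finset.mem_sdiff.mp (hι l)).1)
  have hιW : ∀ l, ι l ∈ W ↔ c l = true := fun l => by
    simp [W, (Finset.mem_sdiff.mp (hι l)).2]
  have hWD : Disjoint W D := by
    simp [Finset.disjoint_right, D, hιW, hc]
  have hdim : ((W ∪ D) \ W).card = n := by simp [Finset.union_sdiff_cancel_left hWD, D]
  have henum : ∀ k, (((W ∪ D) \ W).orderIsoOfFin hdim k : ℕ) = ι (φ k) := fun k => by
    rw [Finset.coe_orderIsoOfFin_apply, ← Finset.orderEmbOfFin_unique' hdim (f := φ.trans ι)]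
    · rfl
    · simp [Finset.union_sdiff_cancel_left hWD, D]
  have hTW : T ⊆ W := Finset.subset_union_left
  refine ⟨⟨W ∪ D, W, hTW, Finset.subset_union_left, ?_, hTW hT.2.1, hTW hT.2.2, hdim⟩, ?_⟩
  · refine Finset.union_subset (Finset.union_subset hT.1 ?_) ?_ <;>
      simp [Finset.subset_iff, D, hιp]
  · intro A l
    simp only [dimMap, henum, decide_eq_true_eq]
    change ι l ∈ W ∨ (∃ k, A k = true ∧ ι (φ k) = ι l) ↔ _
    simp only [hιW, ι.injective.eq_iff]

end Idx

/-- `dim : Nec₊ → □₊` is a discrete fibration: for every necklace `(T,p)` and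
every injective cube map `g : [1]^n → [1]^{dim T}` there is a unique injective
necklace map `f : U ↪ T` with `dim U = n` and `dim f = g`.  The condition
`dim f = g` is expressed coordinatewise: under the identifications
`P_U ≅ [1]^n` (via the enumeration of `V \ W`) and `P_T ≅ [1]^{dim T}` (via the
enumeration of `[p] \ T`), the map `V' ↦ f(V')` agrees with `g`. -/
theorem dim_discreteFibration_on_injective
    (p : ℕ) (T : Finset ℕ) (hT : IsNeck p T) (n : ℕ)
    (G : (Fin n → Bool) → (Fin (cdim p T) → Bool))
    (hG : IsCubeMap G) (hinj : Function.Injective G) :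
    ∃! x : Idx p T n, ∀ (A : Fin n → Bool) (l : Fin (cdim p T)),
      G A l = decide
        ((((Finset.range (p + 1) \ T).orderIsoOfFin rfl l : ℕ) ∈ x.W) ∨
          ∃ kk : Fin n, A kk = true ∧
            (((x.V \ x.W).orderIsoOfFin x.hdim kk : ℕ) =
              ((Finset.range (p + 1) \ T).orderIsoOfFin rfl l : ℕ))) := by
  obtain ⟨c, φ, hc, hGφ⟩ := hG.exists_orderEmbedding_of_injective hinj
  obtain ⟨x, hxφ⟩ := Idx.exists_dimMap_eq_true_iff hT c φ hc
  have hxG : x.dimMap = G :=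
    funext₂ fun A l => Bool.eq_iff_iff.mpr ((hxφ A l).trans (hGφ A l).symm)
  refine ⟨x, fun A l => ?_, fun y hy => Idx.dimMap_injective ?_⟩
  · rw [← hxG]
    rfl
  · rw [hxG]
    exact funext₂ fun A l => (hy A l).symm
end

section
/- For any nonempty finite set of necklaces structure: given a map f: T₁ ∨ T₂ → U in the extended necklace category, there exist unique necklaces U₁, U₂ and maps f_i: T_i → U_i (i = 1,2) in the extended necklace category such that U₁ ∨ U₂ = U ∪ {p} (where p is the wedge point, i.e. the length of T₁'s image endpoint) and f = ν ∘ (f₁ ∨ f₂), where ν: U ∪ {p} → U is the inert map. Moreover, if f is a necklace map (i.e. lies in Nec), then so are f₁ and f₂. -/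
/-- The wedge of necklaces `(T₁,k)` and `(T₂,l)`: joints `T₁ ∪ (k + T₂)`. -/
def wedgeT (T₁ : Finset ℕ) (k : ℕ) (T₂ : Finset ℕ) : Finset ℕ :=
  T₁ ∪ T₂.image (· + k)

/-- The data of a splitting of a morphism `(f, U') : T₁ ∨ T₂ → U` of the
extended necklace category as `ν ∘ (f₁ ∨ f₂)` with `fᵢ = (fᵢ, Uᵢ') : Tᵢ → Uᵢ`,
where `U₁ ∨ U₂ = U ∪ {p}` (`p = f(k)` is the wedge point) and
`ν : U ∪ {p} → U` is the inert map. -/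
structure WedgeSplit (k l n : ℕ) (T₁ T₂ U : Finset ℕ) (f : ℕ → ℕ) (U' : Finset ℕ)
    (U₁ U₂ U₁' U₂' : Finset ℕ) (f₁ f₂ : ℕ → ℕ) : Prop where
  neck₁ : IsNeck (f k) U₁
  neck₂ : IsNeck (n - f k) U₂
  mono₁ : MonotoneOn f₁ (Set.Iic k)
  zero₁ : f₁ 0 = 0
  last₁ : f₁ k = f k
  mono₂ : MonotoneOn f₂ (Set.Iic l)
  zero₂ : f₂ 0 = 0
  last₂ : f₂ l = n - f k
  hom₁ : T₁.image f₁ ∪ U₁ ⊆ U₁'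
  range₁ : U₁' ⊆ Finset.range (f k + 1)
  hom₂ : T₂.image f₂ ∪ U₂ ⊆ U₂'
  range₂ : U₂' ⊆ Finset.range (n - f k + 1)
  wedge_eq : wedgeT U₁ (f k) U₂ = insert (f k) U
  agree₁ : ∀ i ≤ k, f i = f₁ i
  agree₂ : ∀ i ≤ l, f (k + i) = f k + f₂ i
  comp_eq : insert (f k) U ∪ (U₁' ∪ U₂'.image (· + f k)) = U'

/-!
Cutting at the wedge point `p = f k` splits every finite set `S ⊆ ℕ` as
`wedgeT (lowerCut p S) p (upperCut p S) = S`, and conversely a wedge `wedgeT A p B` with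
`A ⊆ [0, p]`, `p ∈ A` and `0 ∈ B` is recovered from its two cuts. The first fact produces the
splitting (with `f₁ = f` and `f₂ i = f (k + i) - f k`), the second forces uniqueness, both for the
target `U ∪ {p} = U₁ ∨ U₂` and for the joint set `U' = U₁' ∨ U₂'`. Since `f` is monotone, the image
of a wedge is the wedge of the images, which makes `f₁`, `f₂` necklace maps when `f` is one.
-/

def lowerCut (p : ℕ) (S : Finset ℕ) : Finset ℕ :=
  S.filter (· ≤ p)

def upperCut (p : ℕ) (S : Finset ℕ) : Finset ℕ :=
  (S.filter (p ≤ ·)).image (· - p)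

section Cuts

variable {p n x : ℕ} {A A' B B' S S' : Finset ℕ}

@[simp]
lemma mem_lowerCut : x ∈ lowerCut p S ↔ x ∈ S ∧ x ≤ p :=
  Finset.mem_filter

@[simp]
lemma mem_upperCut : x ∈ upperCut p S ↔ x + p ∈ S := by
  simp only [upperCut, Finset.mem_image, Finset.mem_filter]
  constructor
  · rintro ⟨y, ⟨hy, hpy⟩, rfl⟩
    rwa [Nat.sub_add_cancel hpy]
  · exact fun h => ⟨x + p, ⟨h, Nat.le_add_left p x⟩, Nat.add_sub_cancel x p⟩

lemma mem_wedgeT : x ∈ wedgeT A p B ↔ x ∈ A ∨ ∃ y ∈ B, y + p = x := by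
  simp [wedgeT]

lemma lowerCut_mono (h : S ⊆ S') : lowerCut p S ⊆ lowerCut p S' :=
  Finset.filter_subset_filter _ h

lemma upperCut_mono (h : S ⊆ S') : upperCut p S ⊆ upperCut p S' :=
  Finset.image_subset_image (Finset.filter_subset_filter _ h)

lemma wedgeT_mono (hA : A ⊆ A') (hB : B ⊆ B') : wedgeT A p B ⊆ wedgeT A' p B' :=
  Finset.union_subset_union hA (Finset.image_subset_image hB)

lemma lowerCut_subset_range : lowerCut p S ⊆ Finset.range (p + 1) := fun x hx => by
  simp only [mem_lowerCut] at hx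
  simpa [Nat.lt_succ_iff] using hx.2

lemma upperCut_subset_range (hS : S ⊆ Finset.range (n + 1)) :
    upperCut p S ⊆ Finset.range (n - p + 1) := fun x hx => by
  have := hS (mem_upperCut.mp hx)
  simp only [Finset.mem_range] at this ⊢
  omega

lemma wedgeT_lowerCut_upperCut (p : ℕ) (S : Finset ℕ) :
    wedgeT (lowerCut p S) p (upperCut p S) = S := by
  ext x
  simp only [mem_wedgeT, mem_lowerCut, mem_upperCut]
  constructor
  · rintro (⟨hx, -⟩ | ⟨y, hy, rfl⟩) <;> assumption
  · intro hx
    rcases le_total x p with hxp | hpx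
    · exact Or.inl ⟨hx, hxp⟩
    · exact Or.inr ⟨x - p, by rwa [Nat.sub_add_cancel hpx], Nat.sub_add_cancel hpx⟩

lemma lowerCut_wedgeT (hA : A ⊆ Finset.range (p + 1)) (hp : p ∈ A) :
    lowerCut p (wedgeT A p B) = A := by
  ext x
  simp only [mem_lowerCut, mem_wedgeT]
  constructor
  · rintro ⟨hx | ⟨y, -, rfl⟩, hle⟩
    · exact hx
    · rwa [show y = 0 by omega, zero_add]
  · intro hx
    have := hA hx
    rw [Finset.mem_range] at this
    exact ⟨Or.inl hx, by omega⟩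

lemma upperCut_wedgeT (hA : A ⊆ Finset.range (p + 1)) (h0 : 0 ∈ B) :
    upperCut p (wedgeT A p B) = B := by
  ext x
  simp only [mem_upperCut, mem_wedgeT]
  constructor
  · rintro (hx | ⟨y, hy, hyx⟩)
    · have := hA hx
      rw [Finset.mem_range] at this
      rwa [show x = 0 by omega]
    · rwa [show x = y by omega]
  · exact fun hx => Or.inr ⟨x, hx, rfl⟩

lemma IsNeck.insert (hS : IsNeck n S) (hp : p ≤ n) : IsNeck n (insert p S) :=
  ⟨Finset.insert_subset (Finset.mem_range.mpr (Nat.lt_succ_of_le hp)) hS.1,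
    Finset.mem_insert_of_mem hS.2.1, Finset.mem_insert_of_mem hS.2.2⟩

lemma IsNeck.lowerCut (hS : IsNeck n S) (hp : p ∈ S) : IsNeck p (lowerCut p S) :=
  ⟨lowerCut_subset_range, mem_lowerCut.mpr ⟨hS.2.1, Nat.zero_le p⟩, mem_lowerCut.mpr ⟨hp, le_rfl⟩⟩

lemma IsNeck.upperCut (hS : IsNeck n S) (hp : p ∈ S) : IsNeck (n - p) (upperCut p S) := by
  have hpn : p ≤ n := Nat.lt_succ_iff.mp (Finset.mem_range.mp (hS.1 hp))
  refine ⟨upperCut_subset_range hS.1, mem_upperCut.mpr ?_, mem_upperCut.mpr ?_⟩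
  · rwa [zero_add]
  · rw [Nat.sub_add_cancel hpn]
    exact hS.2.2

end Cuts

lemma image_wedgeT {A B : Finset ℕ} {k : ℕ} {f : ℕ → ℕ} (hf : ∀ t ∈ B, f k ≤ f (k + t)) :
    (wedgeT A k B).image f = wedgeT (A.image f) (f k) (B.image fun t => f (k + t) - f k) := by
  simp only [wedgeT, Finset.image_union, Finset.image_image]
  congr 1
  refine Finset.image_congr fun t ht => ?_
  have := hf t ht
  simp only [Function.comp_apply, Nat.add_comm t k]
  omega

namespace WedgeSplit

variable {k l n : ℕ} {T₁ T₂ U U' U₁ U₂ U₁' U₂' : Finset ℕ} {f f₁ f₂ : ℕ → ℕ}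

lemma wedgeT_eq (h : WedgeSplit k l n T₁ T₂ U f U' U₁ U₂ U₁' U₂' f₁ f₂) :
    wedgeT U₁' (f k) U₂' = U' := by
  have hsub : insert (f k) U ⊆ wedgeT U₁' (f k) U₂' :=
    h.wedge_eq ▸ wedgeT_mono (Finset.subset_union_right.trans h.hom₁)
      (Finset.subset_union_right.trans h.hom₂)
  exact (Finset.union_eq_right.mpr hsub).symm.trans h.comp_eq

lemma eq_cuts (h : WedgeSplit k l n T₁ T₂ U f U' U₁ U₂ U₁' U₂' f₁ f₂) :
    U₁ = lowerCut (f k) (insert (f k) U) ∧ U₂ = upperCut (f k) (insert (f k) U) ∧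
      U₁' = lowerCut (f k) U' ∧ U₂' = upperCut (f k) U' := by
  have hp : f k ∈ U₁' := h.hom₁ (Finset.mem_union_right _ h.neck₁.2.2)
  have h0 : 0 ∈ U₂' := h.hom₂ (Finset.mem_union_right _ h.neck₂.2.1)
  refine ⟨?_, ?_, ?_, ?_⟩
  · rw [← h.wedge_eq, lowerCut_wedgeT h.neck₁.1 h.neck₁.2.2]
  · rw [← h.wedge_eq, upperCut_wedgeT h.neck₁.1 h.neck₂.2.1]
  · rw [← h.wedgeT_eq, lowerCut_wedgeT h.range₁ hp]
  · rw [← h.wedgeT_eq, upperCut_wedgeT h.range₁ h0]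

end WedgeSplit

section Existence

variable {k l n : ℕ} {T₁ T₂ U U' : Finset ℕ} {f : ℕ → ℕ}

lemma le_apply_add_of_monotoneOn (hmono : MonotoneOn f (Set.Iic (k + l))) {i : ℕ} (hi : i ≤ l) :
    f k ≤ f (k + i) :=
  hmono (Set.mem_Iic.mpr (Nat.le_add_right k l)) (Set.mem_Iic.mpr (Nat.add_le_add_left hi k))
    (Nat.le_add_right k i)

lemma image_wedgeT_of_monotoneOn (hT₂ : IsNeck l T₂) (hmono : MonotoneOn f (Set.Iic (k + l))) :
    (wedgeT T₁ k T₂).image f = wedgeT (T₁.image f) (f k) (T₂.image fun t => f (k + t) - f k) :=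
  image_wedgeT fun _ ht =>
    le_apply_add_of_monotoneOn hmono (Nat.lt_succ_iff.mp (Finset.mem_range.mp (hT₂.1 ht)))

lemma image_subset_range_of_monotoneOn (hT₁ : IsNeck k T₁)
    (hmono : MonotoneOn f (Set.Iic (k + l))) : T₁.image f ⊆ Finset.range (f k + 1) := by
  intro x hx
  obtain ⟨t, ht, rfl⟩ := Finset.mem_image.mp hx
  have htk : t ≤ k := Nat.lt_succ_iff.mp (Finset.mem_range.mp (hT₁.1 ht))
  exact Finset.mem_range.mpr <| Nat.lt_succ_of_le <|
    hmono (Set.mem_Iic.mpr (htk.trans (Nat.le_add_right k l)))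
      (Set.mem_Iic.mpr (Nat.le_add_right k l)) htk

lemma wedgeSplit_cuts (hT₁ : IsNeck k T₁) (hT₂ : IsNeck l T₂) (hU : IsNeck n U)
    (hmono : MonotoneOn f (Set.Iic (k + l))) (hf0 : f 0 = 0) (hfkl : f (k + l) = n)
    (hcomp : (wedgeT T₁ k T₂).image f ∪ U ⊆ U') (hrange : U' ⊆ Finset.range (n + 1)) :
    WedgeSplit k l n T₁ T₂ U f U'
      (lowerCut (f k) (insert (f k) U)) (upperCut (f k) (insert (f k) U))
      (lowerCut (f k) U') (upperCut (f k) U') f (fun i => f (k + i) - f k) := by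
  have hfk : f k ≤ n := hfkl ▸ le_apply_add_of_monotoneOn hmono le_rfl
  have hU₀ : IsNeck n (insert (f k) U) := hU.insert hfk
  have hcomp' : wedgeT (T₁.image f) (f k) (T₂.image fun t => f (k + t) - f k) ⊆ U' := by
    rw [← image_wedgeT_of_monotoneOn hT₂ hmono]
    exact Finset.subset_union_left.trans hcomp
  have hinsert : insert (f k) U ⊆ U' :=
    Finset.insert_subset (hcomp' (Finset.mem_union_left _ (Finset.mem_image_of_mem f hT₁.2.2)))
      (Finset.subset_union_right.trans hcomp)
  refine
    { neck₁ := hU₀.lowerCut (Finset.mem_insert_self _ _)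
      neck₂ := hU₀.upperCut (Finset.mem_insert_self _ _)
      mono₁ := hmono.mono (Set.Iic_subset_Iic.mpr (Nat.le_add_right k l))
      zero₁ := hf0
      last₁ := rfl
      mono₂ := fun a ha b hb hab => Nat.sub_le_sub_right
        (hmono (Set.mem_Iic.mpr (Nat.add_le_add_left ha k))
          (Set.mem_Iic.mpr (Nat.add_le_add_left hb k)) (Nat.add_le_add_left hab k)) _
      zero₂ := by simp
      last₂ := by rw [hfkl]
      hom₁ := Finset.union_subset
        ((lowerCut_wedgeT (image_subset_range_of_monotoneOn hT₁ hmono)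
          (Finset.mem_image_of_mem f hT₁.2.2)).symm.subset.trans (lowerCut_mono hcomp'))
        (lowerCut_mono hinsert)
      range₁ := lowerCut_subset_range
      hom₂ := Finset.union_subset
        (fun x hx => upperCut_mono hcomp' (mem_upperCut.mpr (Finset.mem_union_right _
          (Finset.mem_image_of_mem _ hx))))
        (upperCut_mono hinsert)
      range₂ := upperCut_subset_range hrange
      wedge_eq := wedgeT_lowerCut_upperCut _ _
      agree₁ := fun _ _ => rfl
      agree₂ := fun i hi => ?_
      comp_eq := ?_ }
  · have := le_apply_add_of_monotoneOn hmono hi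
    omega
  · change insert (f k) U ∪ wedgeT (lowerCut (f k) U') (f k) (upperCut (f k) U') = U'
    rw [wedgeT_lowerCut_upperCut, Finset.union_eq_right.mpr hinsert]

end Existence

/-- Splitting lemma for morphisms out of a wedge in the extended necklace
category: given `(f,U') : T₁ ∨ T₂ → U` in `overline{Nec}`, there exist unique
necklaces `U₁, U₂` and morphisms `fᵢ : Tᵢ → Uᵢ` in `overline{Nec}` with
`U₁ ∨ U₂ = U ∪ {p}` (where `p = f(k)` is the wedge point) and
`f = ν ∘ (f₁ ∨ f₂)` for the inert map `ν : U ∪ {p} → U`; moreover if `f` is a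
necklace map (`U' = f(T₁ ∨ T₂)`) then so are `f₁` and `f₂`. -/
theorem extNecklace_wedge_split
    (k l n : ℕ) (T₁ T₂ U : Finset ℕ)
    (hT₁ : IsNeck k T₁) (hT₂ : IsNeck l T₂) (hU : IsNeck n U)
    (f : ℕ → ℕ) (U' : Finset ℕ)
    (hmono : MonotoneOn f (Set.Iic (k + l))) (hf0 : f 0 = 0) (hfkl : f (k + l) = n)
    (hcomp : (wedgeT T₁ k T₂).image f ∪ U ⊆ U') (hrange : U' ⊆ Finset.range (n + 1)) :
    (∃ (U₁ U₂ U₁' U₂' : Finset ℕ) (f₁ f₂ : ℕ → ℕ),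
        WedgeSplit k l n T₁ T₂ U f U' U₁ U₂ U₁' U₂' f₁ f₂ ∧
        (U' = (wedgeT T₁ k T₂).image f → U₁' = T₁.image f₁ ∧ U₂' = T₂.image f₂)) ∧
    (∀ (U₁ U₂ U₁' U₂' : Finset ℕ) (f₁ f₂ : ℕ → ℕ)
       (V₁ V₂ V₁' V₂' : Finset ℕ) (g₁ g₂ : ℕ → ℕ),
       WedgeSplit k l n T₁ T₂ U f U' U₁ U₂ U₁' U₂' f₁ f₂ →
       WedgeSplit k l n T₁ T₂ U f U' V₁ V₂ V₁' V₂' g₁ g₂ →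
       U₁ = V₁ ∧ U₂ = V₂ ∧ U₁' = V₁' ∧ U₂' = V₂' ∧
       (∀ i ≤ k, f₁ i = g₁ i) ∧ (∀ i ≤ l, f₂ i = g₂ i)) := by
  refine ⟨⟨_, _, _, _, f, _, wedgeSplit_cuts hT₁ hT₂ hU hmono hf0 hfkl hcomp hrange,
    fun hnec => ?_⟩, fun U₁ U₂ U₁' U₂' f₁ f₂ V₁ V₂ V₁' V₂' g₁ g₂ h h' => ?_⟩
  · rw [hnec, image_wedgeT_of_monotoneOn hT₂ hmono]
    have hT₁f := image_subset_range_of_monotoneOn hT₁ hmono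
    exact ⟨lowerCut_wedgeT hT₁f (Finset.mem_image_of_mem f hT₁.2.2),
      upperCut_wedgeT hT₁f (Finset.mem_image.mpr ⟨0, hT₂.2.1, by simp⟩)⟩
  · obtain ⟨e₁, e₂, e₁', e₂'⟩ := h.eq_cuts
    obtain ⟨d₁, d₂, d₁', d₂'⟩ := h'.eq_cuts
    refine ⟨e₁.trans d₁.symm, e₂.trans d₂.symm, e₁'.trans d₁'.symm, e₂'.trans d₂'.symm,
      fun i hi => (h.agree₁ i hi).symm.trans (h'.agree₁ i hi), fun i hi => ?_⟩
    have := (h.agree₂ i hi).symm.trans (h'.agree₂ i hi)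
    omega
end

section
/- The subcategories (overline{Nec}₋, overline{Nec}₊) form an orthogonal factorization system on the extended necklace category: every morphism (f,U'): (T,p) → (U,q) with f(T) ⊆ U' and U ⊆ U' factors uniquely as a morphism in overline{Nec}₋ followed by an injective necklace map. -/
/-- The data of a factorization of an extended necklace morphism
`(f,U') : (T,p) → (U,q)` as a morphism `(g,V) : (T,p) → (V,r)` of
`overline{Nec}₋` (component `V`, and `V ∪ g([p]) = [r]`) followed by an
injective necklace map `(h, h(V)) : (V,r) → (U,q)` with component `h(V) = U'`. -/
structure ExtNecFact (p q : ℕ) (T U U' : Finset ℕ) (f : ℕ → ℕ)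
    (r : ℕ) (V : Finset ℕ) (g h : ℕ → ℕ) : Prop where
  neckV : IsNeck r V
  monog : MonotoneOn g (Set.Iic p)
  g0 : g 0 = 0
  gp : g p = r
  gT : ∀ t ∈ T, g t ∈ V
  cover : V ∪ (Finset.range (p + 1)).image g = Finset.range (r + 1)
  stricth : StrictMonoOn h (Set.Iic r)
  h0 : h 0 = 0
  hr : h r = q
  hneck : U ⊆ V.image h
  hcomponent : V.image h = U'
  compeq : ∀ i ≤ p, h (g i) = f i

/-!
In any factorization `(f, U') = (h, U') ∘ (g, V)`, the covering condition `V ∪ g([p]) = [r]`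
forces `h([r]) = U' ∪ f([p]) =: W`; as `h` is strictly increasing on `[r]`, it is the increasing
enumeration of `W`, which determines `r = |W| - 1` and `h`. Injectivity of `h` then determines
`g` (from `h ∘ g = f`) and `V` (from `h(V) = U'`). Conversely, the enumeration
`Nat.nth (· ∈ W)` together with the rank `g := Nat.count (· ∈ W) ∘ f` and `V := rank(U')` is a
factorization.
-/

open Finset

namespace Finset

variable (W : Finset ℕ)

theorem count_lt_card {x : ℕ} (hx : x ∈ W) : Nat.count (· ∈ W) x < #W := by
  have := Nat.count_lt_card (p := (· ∈ W)) W.finite_toSet hx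
  rwa [finite_toSet_toFinset] at this

theorem nth_mem_of_lt_card {i : ℕ} (hi : i < #W) : Nat.nth (· ∈ W) i ∈ W :=
  Nat.nth_mem_of_lt_card (p := (· ∈ W)) W.finite_toSet (by rwa [finite_toSet_toFinset])

theorem count_nth_of_lt_card {i : ℕ} (hi : i < #W) : Nat.count (· ∈ W) (Nat.nth (· ∈ W) i) = i :=
  Nat.count_nth_of_lt_card_finite (p := (· ∈ W)) W.finite_toSet (by rwa [finite_toSet_toFinset])

theorem nth_strictMonoOn : StrictMonoOn (Nat.nth (· ∈ W)) (Set.Iio #W) := by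
  have := Nat.nth_strictMonoOn (p := (· ∈ W)) W.finite_toSet
  rwa [finite_toSet_toFinset] at this

theorem image_count : W.image (Nat.count (· ∈ W)) = range #W := by
  ext i
  simp only [mem_image, mem_range]
  constructor
  · rintro ⟨x, hx, rfl⟩
    exact W.count_lt_card hx
  · intro hi
    exact ⟨_, W.nth_mem_of_lt_card hi, W.count_nth_of_lt_card hi⟩

theorem count_add_one_eq_card_of_subset_range {q : ℕ} (hq : q ∈ W) (hW : W ⊆ range (q + 1)) :
    Nat.count (· ∈ W) q + 1 = #W := by
  rw [← Nat.count_succ_eq_succ_count_iff.2 hq, Nat.count_eq_card_filter_range,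
    filter_mem_eq_inter, inter_eq_right.2 hW]

end Finset

theorem StrictMonoOn.eqOn_of_image_range_eq {h h' : ℕ → ℕ} {r r' : ℕ}
    (hh : StrictMonoOn h (Set.Iic r)) (hh' : StrictMonoOn h' (Set.Iic r'))
    (himg : (range (r + 1)).image h = (range (r' + 1)).image h') :
    r = r' ∧ ∀ i ≤ r, h i = h' i := by
  have card_image {h : ℕ → ℕ} {r : ℕ} (hh : StrictMonoOn h (Set.Iic r)) :
      #((range (r + 1)).image h) = r + 1 := by
    rw [card_image_of_injOn (hh.injOn.mono fun i hi ↦ ?_), card_range]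
    simpa [Nat.lt_succ_iff] using hi
  obtain rfl : r = r' := by simpa [himg, card_image hh'] using (card_image hh).symm
  have onFin {h : ℕ → ℕ} (hh : StrictMonoOn h (Set.Iic r)) :
      StrictMono fun j : Fin (r + 1) ↦ h j :=
    fun a b hab ↦ hh (Nat.lt_succ_iff.1 a.2) (Nat.lt_succ_iff.1 b.2) hab
  have range_eq {h : ℕ → ℕ} :
      Set.range (fun j : Fin (r + 1) ↦ h j) = ((range (r + 1)).image h : Set ℕ) := by
    ext x; simp [Fin.exists_iff]
  have := (onFin hh).range_inj (onFin hh') |>.1 (by rw [range_eq, range_eq, himg])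
  exact ⟨rfl, fun i hi ↦ congrFun this ⟨i, Nat.lt_succ_iff.2 hi⟩⟩

namespace ExtNecFact

variable {p q : ℕ} {T U U' : Finset ℕ} {f : ℕ → ℕ}

theorem g_le {r : ℕ} {V : Finset ℕ} {g h : ℕ → ℕ} (F : ExtNecFact p q T U U' f r V g h)
    {i : ℕ} (hi : i ≤ p) : g i ≤ r :=
  F.gp ▸ F.monog (Set.mem_Iic.2 hi) Set.self_mem_Iic hi

theorem image_range_h {r : ℕ} {V : Finset ℕ} {g h : ℕ → ℕ}
    (F : ExtNecFact p q T U U' f r V g h) :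
    (range (r + 1)).image h = U' ∪ (range (p + 1)).image f := by
  rw [← F.cover, image_union, F.hcomponent, image_image]
  congr 1
  exact image_congr fun j hj ↦ F.compeq j (Nat.lt_succ_iff.1 (mem_range.1 hj))

theorem unique {r₁ r₂ : ℕ} {V₁ V₂ : Finset ℕ} {g₁ h₁ g₂ h₂ : ℕ → ℕ}
    (F₁ : ExtNecFact p q T U U' f r₁ V₁ g₁ h₁) (F₂ : ExtNecFact p q T U U' f r₂ V₂ g₂ h₂) :
    r₁ = r₂ ∧ V₁ = V₂ ∧ (∀ i ≤ p, g₁ i = g₂ i) ∧ (∀ i ≤ r₁, h₁ i = h₂ i) := by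
  obtain ⟨rfl, hh⟩ := F₁.stricth.eqOn_of_image_range_eq F₂.stricth
    (F₁.image_range_h.trans F₂.image_range_h.symm)
  have hg (i : ℕ) (hi : i ≤ p) : g₁ i = g₂ i :=
    F₁.stricth.injOn (F₁.g_le hi) (F₂.g_le hi) <| by
      rw [F₁.compeq i hi, hh _ (F₂.g_le hi), F₂.compeq i hi]
  have hV : V₁.image h₁ = V₂.image h₁ := by
    rw [F₁.hcomponent, ← F₂.hcomponent]
    exact image_congr fun j hj ↦
      (hh j (Nat.lt_succ_iff.1 (mem_range.1 (F₂.neckV.1 hj)))).symm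
  have hinj : Set.InjOn h₁ (range (r₁ + 1) : Set ℕ) :=
    F₁.stricth.injOn.mono fun i hi ↦ by simpa [Nat.lt_succ_iff] using hi
  exact ⟨rfl, (image_eq_image_iff_of_injOn hinj F₁.neckV.1 F₂.neckV.1).1 hV, hg, hh⟩

theorem exists_of_monotoneOn (hmono : MonotoneOn f (Set.Iic p)) (hf0 : f 0 = 0)
    (hfp : f p = q) (hrange : U' ⊆ range (q + 1)) (hTf : ∀ t ∈ T, f t ∈ U') (hUU' : U ⊆ U')
    (h0 : 0 ∈ U') (hq : q ∈ U') :
    ∃ (r : ℕ) (V : Finset ℕ) (g h : ℕ → ℕ), ExtNecFact p q T U U' f r V g h := by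
  set W := U' ∪ (range (p + 1)).image f
  have hU'W : U' ⊆ W := subset_union_left
  have hfW (i : ℕ) (hi : i ≤ p) : f i ∈ W :=
    mem_union_right _ (mem_image_of_mem f (mem_range.2 (Nat.lt_succ_iff.2 hi)))
  have hWq : W ⊆ range (q + 1) := union_subset hrange <| image_subset_iff.2 fun i hi ↦ by
    have hi := Nat.lt_succ_iff.1 (mem_range.1 hi)
    exact mem_range.2 (Nat.lt_succ_iff.2 (hfp ▸ hmono (Set.mem_Iic.2 hi) Set.self_mem_Iic hi))
  have hcard := W.count_add_one_eq_card_of_subset_range (hU'W hq) hWq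
  set c := Nat.count (· ∈ W)
  set e := Nat.nth (· ∈ W)
  have hec (x : ℕ) (hx : x ∈ W) : e (c x) = x := Nat.nth_count hx
  have hcomponent : (U'.image c).image e = U' := by
    rw [image_image]
    exact (image_congr fun x hx ↦ hec x (hU'W hx)).trans image_id
  refine ⟨c q, U'.image c, c ∘ f, e,
    { neckV := ⟨?_, mem_image.2 ⟨0, h0, Nat.count_zero _⟩, mem_image_of_mem c hq⟩
      monog := fun a ha b hb hab ↦ Nat.count_monotone _ (hmono ha hb hab)
      g0 := by simp [hf0, c]
      gp := by simp [hfp]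
      gT := fun t ht ↦ mem_image_of_mem c (hTf t ht)
      cover := ?_
      stricth := W.nth_strictMonoOn.mono fun i hi ↦ by
        rw [← hcard]; exact Nat.lt_succ_iff.2 hi
      h0 := by simpa [c] using hec 0 (hU'W h0)
      hr := hec q (hU'W hq)
      hneck := hcomponent.symm ▸ hUU'
      hcomponent := hcomponent
      compeq := fun i hi ↦ hec _ (hfW i hi) }⟩
  · rw [hcard, ← W.image_count]
    exact image_subset_image hU'W
  · rw [← image_image, ← image_union, W.image_count, hcard]

end ExtNecFact

theorem extNecklace_minus_plus_factorization_general
    (p q : ℕ) (T U U' : Finset ℕ)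
    (hU : IsNeck q U)
    (f : ℕ → ℕ) (hmono : MonotoneOn f (Set.Iic p)) (hf0 : f 0 = 0) (hfp : f p = q)
    (hrange : U' ⊆ Finset.range (q + 1)) (hTf : ∀ t ∈ T, f t ∈ U') (hUU' : U ⊆ U') :
    (∃ (r : ℕ) (V : Finset ℕ) (g h : ℕ → ℕ), ExtNecFact p q T U U' f r V g h) ∧
    (∀ (r₁ : ℕ) (V₁ : Finset ℕ) (g₁ h₁ : ℕ → ℕ)
       (r₂ : ℕ) (V₂ : Finset ℕ) (g₂ h₂ : ℕ → ℕ),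
       ExtNecFact p q T U U' f r₁ V₁ g₁ h₁ →
       ExtNecFact p q T U U' f r₂ V₂ g₂ h₂ →
       r₁ = r₂ ∧ V₁ = V₂ ∧ (∀ i ≤ p, g₁ i = g₂ i) ∧ (∀ i ≤ r₁, h₁ i = h₂ i)) :=
  ⟨ExtNecFact.exists_of_monotoneOn hmono hf0 hfp hrange hTf hUU' (hUU' hU.2.1) (hUU' hU.2.2),
    fun _ _ _ _ _ _ _ _ ↦ ExtNecFact.unique⟩

/-- `(overline{Nec}₋, overline{Nec}₊)` is an orthogonal factorization system on
the extended necklace category: every morphism `(f,U') : (T,p) → (U,q)` (with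
`f(T) ⊆ U'` and `U ⊆ U'`) factors uniquely as a morphism of `overline{Nec}₋`
followed by an injective necklace map. -/
theorem extNecklace_minus_plus_factorization
    (p q : ℕ) (T U U' : Finset ℕ)
    (hT : IsNeck p T) (hU : IsNeck q U)
    (f : ℕ → ℕ) (hmono : MonotoneOn f (Set.Iic p)) (hf0 : f 0 = 0) (hfp : f p = q)
    (hrange : U' ⊆ Finset.range (q + 1)) (hTf : ∀ t ∈ T, f t ∈ U') (hUU' : U ⊆ U') :
    (∃ (r : ℕ) (V : Finset ℕ) (g h : ℕ → ℕ), ExtNecFact p q T U U' f r V g h) ∧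
    (∀ (r₁ : ℕ) (V₁ : Finset ℕ) (g₁ h₁ : ℕ → ℕ)
       (r₂ : ℕ) (V₂ : Finset ℕ) (g₂ h₂ : ℕ → ℕ),
       ExtNecFact p q T U U' f r₁ V₁ g₁ h₁ →
       ExtNecFact p q T U U' f r₂ V₂ g₂ h₂ →
       r₁ = r₂ ∧ V₁ = V₂ ∧ (∀ i ≤ p, g₁ i = g₂ i) ∧ (∀ i ≤ r₁, h₁ i = h₂ i)) :=
  extNecklace_minus_plus_factorization_general p q T U U' hU f hmono hf0 hfp hrange hTf hUU'
end

section
/- For the simplicial circle S¹ (the coequalizer of the two coface maps Δ⁰ ⇉ Δ¹) with unique vertex *, and for each n > 0, there is a bijection between the set ⨿_{p ≥ 0} {monotone maps f: [n] → [p] with f(0) = 0 and f(n) = p} and the set ⨿_{T ∈ Nec, f: Δⁿ → T in overline{Nec}₋} (S¹)^{nd}_T(*,*), where (S¹)^{nd}_T(*,*) is nonempty (and then a singleton) if and only if T is a spine. -/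
/-- The set of non-degenerate `m`-simplices of the simplicial circle `S¹`
(coequalizer of the two coface maps `Δ⁰ ⇉ Δ¹`): the vertex `*` in dimension 0,
the edge `e` in dimension 1, and nothing above. -/
def NondegS1 : ℕ → Type
  | 0 => PUnit
  | 1 => PUnit
  | _ + 2 => Empty

/-- A totally non-degenerate bipointed map `T → (S¹)_{*,*}` for a necklace
`(T,p)`: each bead (interval between consecutive joints `a < b` of `T`) is sent
to a non-degenerate simplex of `S¹` of dimension `b - a`. -/
def TotNonDeg (p : ℕ) (T : Finset ℕ) : Type :=
  ∀ a b : ℕ, a ∈ T → b ∈ T → a < b → (∀ c ∈ T, c ≤ a ∨ b ≤ c) → NondegS1 (b - a)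

/-!
A bead `a < b` of a necklace must go to a non-degenerate simplex of dimension `b - a`, and `S¹`
has none above dimension 1. So a gap `k ∉ T` with `0 < k < p` would sit inside a bead of
dimension at least 2: only the spine `{0, …, p}` admits a totally non-degenerate map, and it
admits exactly one. Over the spine the condition `U ∪ im f = [p]` is vacuous, so both sides of
the bijection are, for each `p`, the endpoint-preserving monotone maps `[n] → [p]`.
-/

instance NondegS1.instSubsingleton (m : ℕ) : Subsingleton (NondegS1 m) :=
  match m with
  | 0 | 1 => inferInstanceAs (Subsingleton PUnit)
  | _ + 2 => inferInstanceAs (Subsingleton Empty)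

theorem NondegS1.isEmpty_of_two_le {m : ℕ} (hm : 2 ≤ m) : IsEmpty (NondegS1 m) := by
  obtain ⟨k, rfl⟩ := Nat.exists_eq_add_of_le' hm
  exact inferInstanceAs (IsEmpty Empty)

instance TotNonDeg.instSubsingleton (p : ℕ) (T : Finset ℕ) : Subsingleton (TotNonDeg p T) := by
  unfold TotNonDeg
  infer_instance

theorem isNeck_range (p : ℕ) : IsNeck p (Finset.range (p + 1)) :=
  ⟨subset_rfl, by simp, by simp⟩

theorem Finset.exists_bead_of_notMem {T : Finset ℕ} {a₀ b₀ k : ℕ} (ha₀ : a₀ ∈ T) (hb₀ : b₀ ∈ T)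
    (ha₀k : a₀ < k) (hkb₀ : k < b₀) (hk : k ∉ T) :
    ∃ a ∈ T, ∃ b ∈ T, a < k ∧ k < b ∧ ∀ c ∈ T, c ≤ a ∨ b ≤ c := by
  have hA : (T.filter (· < k)).Nonempty := ⟨a₀, Finset.mem_filter.2 ⟨ha₀, ha₀k⟩⟩
  have hB : (T.filter (k < ·)).Nonempty := ⟨b₀, Finset.mem_filter.2 ⟨hb₀, hkb₀⟩⟩
  obtain ⟨haT, hak⟩ := Finset.mem_filter.1 ((T.filter (· < k)).max'_mem hA)
  obtain ⟨hbT, hkb⟩ := Finset.mem_filter.1 ((T.filter (k < ·)).min'_mem hB)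
  refine ⟨_, haT, _, hbT, hak, hkb, fun c hc => ?_⟩
  rcases lt_trichotomy c k with hck | rfl | hkc
  · exact Or.inl (Finset.le_max' _ c (Finset.mem_filter.2 ⟨hc, hck⟩))
  · exact absurd hc hk
  · exact Or.inr (Finset.min'_le _ c (Finset.mem_filter.2 ⟨hc, hkc⟩))

def TotNonDeg.spine (p : ℕ) : TotNonDeg p (Finset.range (p + 1)) :=
  fun a b _ hb hab hbead => by
    have hlen : b - a = 1 := by
      have := hbead (a + 1) (by simp only [Finset.mem_range] at hb ⊢; omega)
      omega
    rw [hlen]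
    exact PUnit.unit

theorem TotNonDeg.eq_range {p : ℕ} {T : Finset ℕ} (hT : IsNeck p T) (t : TotNonDeg p T) :
    T = Finset.range (p + 1) := by
  obtain ⟨hsub, h0, hp⟩ := hT
  refine hsub.antisymm fun k hk => ?_
  by_contra hkT
  have hk0 : 0 < k := Nat.pos_of_ne_zero fun h => hkT (h ▸ h0)
  have hkp : k < p := lt_of_le_of_ne (Nat.lt_succ_iff.1 (Finset.mem_range.1 hk))
    fun h => hkT (h ▸ hp)
  obtain ⟨a, ha, b, hb, hak, hkb, hbead⟩ := Finset.exists_bead_of_notMem h0 hp hk0 hkp hkT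
  exact (NondegS1.isEmpty_of_two_le (by omega)).false (t a b ha hb (by omega) hbead)

theorem nonempty_totNonDeg_iff {p : ℕ} {T : Finset ℕ} (hT : IsNeck p T) :
    Nonempty (TotNonDeg p T) ↔ T = Finset.range (p + 1) :=
  ⟨fun ⟨t⟩ => t.eq_range hT, fun h => h ▸ ⟨TotNonDeg.spine p⟩⟩

def spineEquiv (n p : ℕ) :
    {f : Fin (n + 1) →o Fin (p + 1) // f 0 = 0 ∧ f (Fin.last n) = Fin.last p} ≃
      Σ T : {T : Finset ℕ // IsNeck p T},
        {f : Fin (n + 1) →o Fin (p + 1) //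
            f 0 = 0 ∧ f (Fin.last n) = Fin.last p ∧
            ∀ j : Fin (p + 1), (j : ℕ) ∈ T.1 ∨ ∃ i, f i = j} ×
          TotNonDeg p T.1 where
  toFun f := ⟨⟨_, isNeck_range p⟩,
    ⟨f.1, f.2.1, f.2.2, fun j => Or.inl (Finset.mem_range.2 j.isLt)⟩, TotNonDeg.spine p⟩
  invFun x := ⟨x.2.1.1, x.2.1.2.1, x.2.1.2.2.1⟩
  left_inv _ := rfl
  right_inv := by
    rintro ⟨⟨T, hT⟩, f, t⟩
    obtain rfl := t.eq_range hT
    exact Sigma.ext rfl (heq_of_eq (Prod.ext rfl (Subsingleton.elim _ _)))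

theorem simplicial_circle_free_frobenius_general
    (n : ℕ) :
    (∀ (p : ℕ) (T : Finset ℕ), IsNeck p T →
        (Nonempty (TotNonDeg p T) ↔ T = Finset.range (p + 1))) ∧
    (∀ (p : ℕ) (T : Finset ℕ), IsNeck p T → T = Finset.range (p + 1) →
        Subsingleton (TotNonDeg p T)) ∧
    Nonempty
      ((Σ p : ℕ, {f : Fin (n + 1) →o Fin (p + 1) //
          f 0 = 0 ∧ f (Fin.last n) = Fin.last p}) ≃
       (Σ p : ℕ, Σ T : {T : Finset ℕ // IsNeck p T},
          {f : Fin (n + 1) →o Fin (p + 1) //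
              f 0 = 0 ∧ f (Fin.last n) = Fin.last p ∧
              ∀ j : Fin (p + 1), (j : ℕ) ∈ T.1 ∨ ∃ i, f i = j} ×
            TotNonDeg p T.1)) :=
  ⟨fun _ _ hT => nonempty_totNonDeg_iff hT, fun _ _ _ _ => inferInstance,
    ⟨Equiv.sigmaCongrRight (spineEquiv n)⟩⟩

/-- For the simplicial circle `S¹` with unique vertex `*` and each `n > 0`:
`(S¹)^{nd}_T(*,*)` is nonempty iff `T` is a spine (and then a singleton), and
there is a bijection
`⨿_{p≥0} {monotone f : [n]→[p], f(0)=0, f(n)=p} ≃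
 ⨿_{T ∈ Nec, f : Δⁿ → T in overline{Nec}₋} (S¹)^{nd}_T(*,*)`. -/
theorem simplicial_circle_free_frobenius
    (n : ℕ) (hn : 0 < n) :
    (∀ (p : ℕ) (T : Finset ℕ), IsNeck p T →
        (Nonempty (TotNonDeg p T) ↔ T = Finset.range (p + 1))) ∧
    (∀ (p : ℕ) (T : Finset ℕ), IsNeck p T → T = Finset.range (p + 1) →
        Subsingleton (TotNonDeg p T)) ∧
    Nonempty
      ((Σ p : ℕ, {f : Fin (n + 1) →o Fin (p + 1) //
          f 0 = 0 ∧ f (Fin.last n) = Fin.last p}) ≃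
       (Σ p : ℕ, Σ T : {T : Finset ℕ // IsNeck p T},
          {f : Fin (n + 1) →o Fin (p + 1) //
              f 0 = 0 ∧ f (Fin.last n) = Fin.last p ∧
              ∀ j : Fin (p + 1), (j : ℕ) ∈ T.1 ∨ ∃ i, f i = j} ×
            TotNonDeg p T.1)) :=
  simplicial_circle_free_frobenius_general n
end

section
/- In the category of cubes with connections, for 1 ≤ j ≤ n−1 the connection satisfies the simplicial-style identities making dim a functor: dim(σ_k: Δ^{p+1} → Δ^p) = γ_k for 0 < k < p, dim(σ_0) = σ_1 and dim(σ_p) = σ_p as maps [1]^p → [1]^{p−1}; explicitly, the map P_{Δ^{p+1}} → P_{Δ^p}, V ↦ σ_k(V), corresponds under the identification P_{Δ^m} ≅ [1]^{m−1} to the connection γ_k: [1]^p → [1]^{p−1}, (ε_1,...,ε_p) ↦ (ε_1,...,max(ε_k,ε_{k+1}),...,ε_p), for 0 < k < p. -/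
/-- The underlying map of the codegeneracy `σ_k : [p+1] → [p]` (identifying `k` and
`k+1`). -/
def sigmaMap (k : ℕ) : ℕ → ℕ := fun x => if x ≤ k then x else x - 1

lemma mem_image_sigmaMap {k j : ℕ} {V : Finset ℕ} :
    j ∈ V.image (sigmaMap k) ↔ (j ≤ k ∧ j ∈ V) ∨ (k ≤ j ∧ j + 1 ∈ V) := by
  simp only [Finset.mem_image, sigmaMap]
  constructor
  · rintro ⟨x, hx, rfl⟩
    split_ifs with hxk
    · exact Or.inl ⟨hxk, hx⟩
    · exact Or.inr ⟨by omega, by rwa [Nat.sub_add_cancel (by omega)]⟩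
  · rintro (⟨hjk, hj⟩ | ⟨hkj, hj⟩)
    · exact ⟨j, hj, if_pos hjk⟩
    · exact ⟨j + 1, hj, by rw [if_neg (by omega), Nat.add_sub_cancel]⟩

lemma mem_image_sigmaMap_of_lt {k j : ℕ} {V : Finset ℕ} (h : j < k) :
    j ∈ V.image (sigmaMap k) ↔ j ∈ V := by
  rw [mem_image_sigmaMap]
  constructor
  · rintro (⟨_, hj⟩ | ⟨hkj, _⟩)
    · exact hj
    · omega
  · exact fun hj => Or.inl ⟨h.le, hj⟩

lemma mem_image_sigmaMap_self {k : ℕ} {V : Finset ℕ} :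
    k ∈ V.image (sigmaMap k) ↔ k ∈ V ∨ k + 1 ∈ V := by
  simp only [mem_image_sigmaMap, le_refl, true_and]

lemma mem_image_sigmaMap_of_gt {k j : ℕ} {V : Finset ℕ} (h : k < j) :
    j ∈ V.image (sigmaMap k) ↔ j + 1 ∈ V := by
  rw [mem_image_sigmaMap]
  constructor
  · rintro (⟨hjk, _⟩ | ⟨_, hj⟩)
    · omega
    · exact hj
  · exact fun hj => Or.inr ⟨h.le, hj⟩

theorem dim_of_codegeneracy_general
    (p : ℕ) (V : Finset ℕ) :
    (∀ k, 0 < k → k < p → ∀ j, 1 ≤ j → j ≤ p - 1 →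
      (j ∈ V.image (sigmaMap k) ↔
        (if j < k then j ∈ V else if j = k then (k ∈ V ∨ k + 1 ∈ V) else j + 1 ∈ V))) ∧
    (∀ j, 1 ≤ j → j ≤ p - 1 → (j ∈ V.image (sigmaMap 0) ↔ j + 1 ∈ V)) ∧
    (∀ j, 1 ≤ j → j ≤ p - 1 → (j ∈ V.image (sigmaMap p) ↔ j ∈ V)) := by
  refine ⟨fun k _ _ j _ _ => ?_, fun j hj _ => mem_image_sigmaMap_of_gt hj,
    fun j hj hjp => mem_image_sigmaMap_of_lt (by omega)⟩
  split_ifs with hjk hjk'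
  · exact mem_image_sigmaMap_of_lt hjk
  · exact hjk' ▸ mem_image_sigmaMap_self
  · exact mem_image_sigmaMap_of_gt (by omega)

/-- Under the identification `P_{Δ^m} ≅ [1]^{m-1}` (via the complement
`{1,…,m-1}`, coordinate `j ↔ (j ∈ V)`), the induced map
`P_{Δ^{p+1}} → P_{Δ^p}, V ↦ σ_k(V)` corresponds to the connection
`γ_k : [1]^p → [1]^{p-1}` for `0 < k < p`, to the cubical degeneracy `σ_1`
(deleting the first coordinate) for `k = 0`, and to `σ_p` (deleting the last
coordinate) for `k = p`. -/
theorem dim_of_codegeneracy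
    (p : ℕ) (hp : 0 < p) (V : Finset ℕ)
    (hV1 : ({0, p + 1} : Finset ℕ) ⊆ V) (hV2 : V ⊆ Finset.range (p + 2)) :
    (∀ k, 0 < k → k < p → ∀ j, 1 ≤ j → j ≤ p - 1 →
      (j ∈ V.image (sigmaMap k) ↔
        (if j < k then j ∈ V else if j = k then (k ∈ V ∨ k + 1 ∈ V) else j + 1 ∈ V))) ∧
    (∀ j, 1 ≤ j → j ≤ p - 1 → (j ∈ V.image (sigmaMap 0) ↔ j + 1 ∈ V)) ∧
    (∀ j, 1 ≤ j → j ≤ p - 1 → (j ∈ V.image (sigmaMap p) ↔ j ∈ V)) :=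
  dim_of_codegeneracy_general p V
end
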